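/- For every d ≥ 2 there is a spanning tree of Q_d that is weakly (Q_d, Q_2)-saturated; hence wsat(Q_d, Q_2) = 2^d − 1. -/

import Mathlib

open SimpleGraph Finset

def cube (d : ℕ) : SimpleGraph (Fin d → ZMod 2) :=
  SimpleGraph.fromRel (fun u v => ∃ i, u i ≠ v i ∧ ∀ j, j ≠ i → u j = v j)

def grid (k d : ℕ) : SimpleGraph (Fin d → Fin k) :=
  SimpleGraph.fromRel (fun u v => ∃ i, ((u i : ℕ)) + 1 = (v i : ℕ) ∧ ∀ j, j ≠ i → u j = v j)

def CopyAt {α β : Type*} (H : SimpleGraph α) (G : SimpleGraph β) (u v : β) : Prop :=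
  ∃ f : α → β, Function.Injective f ∧ (∀ ⦃a b⦄, H.Adj a b → G.Adj (f a) (f b)) ∧
    ∃ a b, H.Adj a b ∧ f a = u ∧ f b = v

def ContainsCopy {α β : Type*} (H : SimpleGraph α) (G : SimpleGraph β) : Prop :=
  ∃ f : α → β, Function.Injective f ∧ ∀ ⦃a b⦄, H.Adj a b → G.Adj (f a) (f b)

def WeaklySaturated {α β : Type*} (F G : SimpleGraph β) (H : SimpleGraph α) : Prop :=
  G ≤ F ∧ ∃ (n : ℕ) (seq : ℕ → SimpleGraph β), seq 0 = G ∧ seq n = F ∧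
    ∀ i < n, ∃ u v : β, ¬ (seq i).Adj u v ∧ F.Adj u v ∧
      seq (i + 1) = seq i ⊔ SimpleGraph.fromEdgeSet {s(u, v)} ∧
      CopyAt H (seq (i + 1)) u v

noncomputable def wsatNum {α β : Type*} (F : SimpleGraph β) (H : SimpleGraph α) : ℕ :=
  sInf {n | ∃ G, WeaklySaturated F G H ∧ G.edgeSet.ncard = n}

def Saturated {α β : Type*} (F G : SimpleGraph β) (H : SimpleGraph α) : Prop :=
  G ≤ F ∧ ¬ ContainsCopy H G ∧ ∀ u v : β, F.Adj u v → ¬ G.Adj u v →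
    ContainsCopy H (G ⊔ SimpleGraph.fromEdgeSet {s(u, v)})

noncomputable def satNum {α β : Type*} (F : SimpleGraph β) (H : SimpleGraph α) : ℕ :=
  sInf {n | ∃ G, Saturated F G H ∧ G.edgeSet.ncard = n}

/-!
Write `eᵢ = Pi.single i 1` and let `T` join each nonzero `x` to `x` with its highest nonzero
coordinate cleared. The Hamming weight drops along these edges, so `T` is connected, and it has
one edge per nonzero vertex, so it is a spanning tree of `Q_d`. A missing edge `s(w, w + eᵢ)` with
`w i = 1` lies on the square `w, w + eᵢ, w + eᵢ + eₜ, w + eₜ`, where `t > i` is the top coordinate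
of `w`: two of its sides are tree edges and the third is an edge of the same kind at `w + eₜ`,
which has smaller weight. So the missing edges can be added in order of increasing weight.
Conversely, an edge added on a square joins vertices that were already connected, so every weakly
saturated graph is connected and has at least `2 ^ d - 1` edges.
-/

namespace ZMod

lemma two_cases (a : ZMod 2) : a = 0 ∨ a = 1 := by
  revert a; decide

lemma two_ne_iff_eq_add_one {a b : ZMod 2} : a ≠ b ↔ b = a + 1 := by
  revert a b; decide

end ZMod

section Cube

variable {d : ℕ}

lemma add_single_add_single_self (x : Fin d → ZMod 2) (i : Fin d) :
    x + Pi.single i 1 + Pi.single i 1 = x := by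
  ext j
  obtain rfl | hj := eq_or_ne j i <;> simp [*, add_assoc, CharTwo.add_self_eq_zero]

lemma cube_adj_iff {u v : Fin d → ZMod 2} :
    (cube d).Adj u v ↔ ∃ i, v = u + Pi.single i 1 := by
  simp only [cube, fromRel_adj]
  constructor
  · rintro ⟨-, ⟨i, hi, hoff⟩ | ⟨i, hi, hoff⟩⟩ <;> refine ⟨i, funext fun j => ?_⟩ <;>
      obtain rfl | hji := eq_or_ne j i
    · simpa using ZMod.two_ne_iff_eq_add_one.mp hi
    · simpa [hji] using (hoff j hji).symm
    · simpa using ZMod.two_ne_iff_eq_add_one.mp (Ne.symm hi)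
    · simpa [hji] using hoff j hji
  · rintro ⟨i, rfl⟩
    exact ⟨fun h => by simpa using congrFun h i, Or.inl ⟨i, by simp, fun j hj => by simp [hj]⟩⟩

lemma cube_adj_add_single (x : Fin d → ZMod 2) (i : Fin d) :
    (cube d).Adj x (x + Pi.single i 1) :=
  cube_adj_iff.mpr ⟨i, rfl⟩

/-- Every edge of `Q_d`, `d ≥ 2`, lies on a square. -/
lemma not_isBridge_cube (hd : 2 ≤ d) {e : Sym2 (Fin d → ZMod 2)} (he : e ∈ (cube d).edgeSet) :
    ¬ (cube d).IsBridge e := by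
  induction e using Sym2.inductionOn with | hf a b => ?_
  rw [mem_edgeSet] at he
  obtain ⟨i, rfl⟩ := cube_adj_iff.mp he
  have : Nontrivial (Fin d) := Fin.nontrivial_iff_two_le.mpr hd
  obtain ⟨j, hji⟩ := exists_ne i
  rw [isBridge_iff, not_not, reachable_deleteEdges_iff_exists_walk]
  refine ⟨.cons (cube_adj_add_single a j) <| .cons (cube_adj_add_single _ i) <|
    .cons (cube_adj_iff.mpr ⟨j, ?_⟩) .nil, ?_⟩
  · rw [add_right_comm, add_single_add_single_self]
  · simp only [Walk.edges_cons, Walk.edges_nil, List.mem_cons, Sym2.eq_iff, List.not_mem_nil,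
      or_false]
    have hj : ∀ x y : Fin d → ZMod 2, x j ≠ y j → x ≠ y := fun x y h hxy => h (congrFun hxy j)
    rintro (((⟨-, h⟩ | ⟨h, -⟩) | (⟨h, -⟩ | ⟨h, -⟩) | (⟨h, -⟩ | ⟨-, h⟩))) <;>
      exact hj _ _ (by simp [hji]) h

end Cube

section WeakSaturation

variable {α β : Type*}

lemma copyAt_cube_two_of_square {G : SimpleGraph β} {a b c d : β}
    (hab : G.Adj a b) (hbc : G.Adj b c) (hcd : G.Adj c d) (hda : G.Adj d a)
    (hac : a ≠ c) (hbd : b ≠ d) : CopyAt (cube 2) G a b := by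
  let f : (Fin 2 → ZMod 2) → β := fun x =>
    if x 0 = 0 then (if x 1 = 0 then a else d) else (if x 1 = 0 then b else c)
  refine ⟨f, fun x y hxy => ?_, fun x y hxy => ?_, ![0, 0], ![1, 0], ?_, rfl, rfl⟩
  · ext j
    rcases ZMod.two_cases (x 0) with h0 | h0 <;> rcases ZMod.two_cases (x 1) with h1 | h1 <;>
      rcases ZMod.two_cases (y 0) with h2 | h2 <;> rcases ZMod.two_cases (y 1) with h3 | h3 <;>
      simp_all [f, hab.ne, hbc.ne, hcd.ne, hda.ne, hab.ne.symm, hbc.ne.symm, hcd.ne.symm,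
        hda.ne.symm, hac.symm, hbd.symm] <;>
      fin_cases j <;> simp_all
  · obtain ⟨k, rfl⟩ := cube_adj_iff.mp hxy
    rcases ZMod.two_cases (x 0) with h0 | h0 <;> rcases ZMod.two_cases (x 1) with h1 | h1 <;>
      fin_cases k <;>
      simp_all [f, CharTwo.add_self_eq_zero, hab.symm, hbc.symm, hcd.symm, hda.symm]
  · exact cube_adj_iff.mpr ⟨0, by decide⟩

/-- A path from `a` to `b` avoiding `s(a, b)` in `H` maps into `A`. -/
lemma CopyAt.reachable_of_sup_edge {H : SimpleGraph α} {A : SimpleGraph β} {u v : β}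
    (hH : ∀ e ∈ H.edgeSet, ¬ H.IsBridge e) (h : CopyAt H (A ⊔ edge u v) u v) :
    A.Reachable u v := by
  obtain ⟨f, hf, hhom, a, b, hab, rfl, rfl⟩ := h
  have hab' : (H.deleteEdges {s(a, b)}).Reachable a b := not_not.mp (hH s(a, b) hab)
  refine hab'.map ⟨f, fun {x y} hxy => ?_⟩
  rw [deleteEdges_adj, Set.mem_singleton_iff] at hxy
  rcases hhom hxy.1 with h | h
  · exact h
  · obtain ⟨⟨hxa, hyb⟩ | ⟨hxb, hya⟩, -⟩ := (edge_adj ..).mp h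
    · exact absurd (by rw [hf hxa, hf hyb]) hxy.2
    · exact absurd (by rw [hf hxb, hf hya, Sym2.eq_swap]) hxy.2

lemma reachable_of_sup_edge {A : SimpleGraph β} {u v x y : β} (huv : A.Reachable u v)
    (h : (A ⊔ edge u v).Reachable x y) : A.Reachable x y := by
  obtain ⟨p⟩ := h
  induction p with
  | nil => rfl
  | cons hadj _ ih =>
    refine .trans ?_ ih
    rcases hadj with hadj | hadj
    · exact hadj.reachable
    · obtain ⟨⟨rfl, rfl⟩ | ⟨rfl, rfl⟩, -⟩ := (edge_adj ..).mp hadj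
      exacts [huv, huv.symm]

lemma WeaklySaturated.reachable {F G : SimpleGraph β} {H : SimpleGraph α}
    (hH : ∀ e ∈ H.edgeSet, ¬ H.IsBridge e) (h : WeaklySaturated F G H) {x y : β}
    (hxy : F.Reachable x y) : G.Reachable x y := by
  obtain ⟨-, n, seq, h0, hn, hstep⟩ := h
  suffices ∀ m ≤ n, (seq m).Reachable x y → G.Reachable x y from this n le_rfl (hn ▸ hxy)
  intro m
  induction m with
  | zero => exact fun _ h => h0 ▸ h
  | succ m ih =>
    intro hm h
    obtain ⟨u, v, -, -, hseq, hcopy⟩ := hstep m (by omega)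
    rw [hseq] at h hcopy
    exact ih (by omega) (reachable_of_sup_edge (hcopy.reachable_of_sup_edge hH) h)

lemma WeaklySaturated.refl {F : SimpleGraph β} {H : SimpleGraph α} : WeaklySaturated F F H :=
  ⟨le_rfl, 0, fun _ => F, rfl, rfl, by simp⟩

lemma WeaklySaturated.of_sup_edge {F A : SimpleGraph β} {H : SimpleGraph α} {u v : β}
    (hAF : A ≤ F) (huv : ¬ A.Adj u v) (hF : F.Adj u v) (hcopy : CopyAt H (A ⊔ edge u v) u v)
    (h : WeaklySaturated F (A ⊔ edge u v) H) : WeaklySaturated F A H := by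
  obtain ⟨-, n, seq, h0, hn, hstep⟩ := h
  refine ⟨hAF, n + 1, fun | 0 => A | k + 1 => seq k, rfl, hn, ?_⟩
  rintro (_ | k) hk
  · exact ⟨u, v, huv, hF, h0, by simpa only [h0] using hcopy⟩
  · exact hstep k (by omega)

lemma weaklySaturated_of_exists_step [Finite β] {F G : SimpleGraph β} {H : SimpleGraph α}
    (hGF : G ≤ F)
    (step : ∀ A, G ≤ A → A < F →
      ∃ u v, ¬ A.Adj u v ∧ F.Adj u v ∧ CopyAt H (A ⊔ edge u v) u v) :
    WeaklySaturated F G H := by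
  suffices ∀ A, G ≤ A → A ≤ F → WeaklySaturated F A H from this G le_rfl hGF
  intro A
  induction A using WellFoundedGT.induction with
  | _ A ih =>
    intro hGA hAF
    obtain rfl | hA := eq_or_ne A F
    · exact .refl
    obtain ⟨u, v, huv, hF, hcopy⟩ := step A hGA (lt_of_le_of_ne hAF hA)
    have hlt : A < A ⊔ edge u v := A.lt_sup_edge u v hF.ne huv
    exact .of_sup_edge hAF huv hF hcopy <| ih _ hlt (hGA.trans hlt.le)
      (sup_le hAF (F.edge_le_iff.mpr (.inr hF)))

lemma wsatNum_eq_of_isTree [Finite β] {F T : SimpleGraph β} {H : SimpleGraph α}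
    (hH : ∀ e ∈ H.edgeSet, ¬ H.IsBridge e) (hT : T.IsTree) (hTF : WeaklySaturated F T H) :
    wsatNum F H = Nat.card β - 1 := by
  have hmem : Nat.card β - 1 ∈ {n | ∃ G, WeaklySaturated F G H ∧ G.edgeSet.ncard = n} := by
    refine ⟨T, hTF, ?_⟩
    have := (isTree_iff_connected_and_card.mp hT).2
    rw [← Nat.card_coe_set_eq]
    omega
  refine le_antisymm (Nat.sInf_le hmem) (le_csInf ⟨_, hmem⟩ ?_)
  rintro _ ⟨G, hG, rfl⟩
  have := hT.connected.nonempty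
  have hGconn : G.Connected :=
    ⟨fun x y => hG.reachable hH ((hT.connected.mono hTF.1).preconnected x y)⟩
  have := hGconn.card_vert_le_card_edgeSet_add_one
  rw [Nat.card_coe_set_eq] at this
  omega

end WeakSaturation

section TopBitTree

variable {d : ℕ}

lemma hammingNorm_add_single_lt {x : Fin d → ZMod 2} {i : Fin d} (hi : x i = 1) :
    hammingNorm (x + Pi.single i 1) < hammingNorm x := by
  refine Finset.card_lt_card ⟨fun j => ?_, fun hsub => ?_⟩
  · obtain rfl | hj := eq_or_ne j i <;> simp [*, CharTwo.add_self_eq_zero]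
  · simpa [hi, CharTwo.add_self_eq_zero] using @hsub i

def IsTopBit (x : Fin d → ZMod 2) (i : Fin d) : Prop :=
  x i = 1 ∧ ∀ j, i < j → x j = 0

lemma IsTopBit.ne_zero {x : Fin d → ZMod 2} {i : Fin d} (h : IsTopBit x i) : x ≠ 0 :=
  fun hx => zero_ne_one (α := ZMod 2) (by simpa [hx] using h.1)

lemma IsTopBit.unique {x : Fin d → ZMod 2} {i j : Fin d} (hi : IsTopBit x i)
    (hj : IsTopBit x j) : i = j := by
  rcases lt_trichotomy i j with h | h | h
  · simpa [hj.1] using hi.2 j h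
  · exact h
  · simpa [hi.1] using hj.2 i h

lemma IsTopBit.add_single_of_lt {x : Fin d → ZMod 2} {i t : Fin d} (ht : IsTopBit x t)
    (hit : i < t) : IsTopBit (x + Pi.single i 1) t :=
  ⟨by simpa [hit.ne'] using ht.1,
    fun j hj => by simpa [(hit.trans hj).ne'] using ht.2 j hj⟩

lemma exists_isTopBit {x : Fin d → ZMod 2} (hx : x ≠ 0) : ∃ i, IsTopBit x i := by
  obtain ⟨i, hi, hmax⟩ := Finset.exists_max_image {j | x j ≠ 0} id
    (Function.ne_iff.mp hx |>.imp fun j hj => by simpa using hj)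
  refine ⟨i, (ZMod.two_cases _).resolve_left (by simpa using hi), fun j hij => ?_⟩
  by_contra hj
  exact (hmax j (by simpa using hj)).not_gt hij

def topBitTree (d : ℕ) : SimpleGraph (Fin d → ZMod 2) :=
  fromRel fun x y => ∃ i, IsTopBit x i ∧ y = x + Pi.single i 1

lemma topBitTree_adj_of_isTopBit {x : Fin d → ZMod 2} {i : Fin d} (h : IsTopBit x i) :
    (topBitTree d).Adj x (x + Pi.single i 1) :=
  ⟨(cube_adj_add_single x i).ne, .inl ⟨i, h, rfl⟩⟩

lemma topBitTree_le_cube : topBitTree d ≤ cube d := by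
  rintro x y ⟨-, ⟨i, -, rfl⟩ | ⟨i, -, rfl⟩⟩
  exacts [cube_adj_add_single x i, (cube_adj_add_single y i).symm]

lemma topBitTree_reachable_zero (x : Fin d → ZMod 2) : (topBitTree d).Reachable x 0 := by
  induction x using (measure (hammingNorm : (Fin d → ZMod 2) → ℕ)).wf.induction with
  | _ x ih => ?_
  obtain rfl | hx := eq_or_ne x 0
  · rfl
  obtain ⟨i, hi⟩ := exists_isTopBit hx
  exact (topBitTree_adj_of_isTopBit hi).reachable.trans (ih _ (hammingNorm_add_single_lt hi.1))

lemma topBitTree_connected : (topBitTree d).Connected :=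
  ⟨fun x y => (topBitTree_reachable_zero x).trans (topBitTree_reachable_zero y).symm⟩

lemma topBitTree_isTree : (topBitTree d).IsTree := by
  refine isTree_iff_connected_and_card.mpr ⟨topBitTree_connected, le_antisymm ?_
    topBitTree_connected.card_vert_le_card_edgeSet_add_one⟩
  choose top htop using fun x : {x : Fin d → ZMod 2 // x ≠ 0} => exists_isTopBit x.2
  let parentEdge (x : {x : Fin d → ZMod 2 // x ≠ 0}) : (topBitTree d).edgeSet :=
    ⟨s(x.1, x.1 + Pi.single (top x) 1), topBitTree_adj_of_isTopBit (htop x)⟩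
  have hsurj : Function.Surjective parentEdge := by
    rintro ⟨e, he⟩
    induction e using Sym2.inductionOn with | hf x y => ?_
    rw [mem_edgeSet] at he
    obtain ⟨-, ⟨i, hi, rfl⟩ | ⟨i, hi, rfl⟩⟩ := he
    · exact ⟨⟨x, hi.ne_zero⟩, by simp [parentEdge, (htop ⟨x, hi.ne_zero⟩).unique hi]⟩
    · exact ⟨⟨y, hi.ne_zero⟩,
        by simp [parentEdge, (htop ⟨y, hi.ne_zero⟩).unique hi, Sym2.eq_swap]⟩
  calc Nat.card (topBitTree d).edgeSet + 1 ≤ Nat.card {x : Fin d → ZMod 2 // x ≠ 0} + 1 := by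
        gcongr; exact Nat.card_le_card_of_surjective _ hsurj
    _ = Nat.card (Fin d → ZMod 2) := by
        have := Nat.one_le_two_pow (n := d)
        simp [Nat.card_eq_fintype_card, Fintype.card_subtype_compl]
        omega

lemma exists_missing_edge_of_lt_cube {A : SimpleGraph (Fin d → ZMod 2)} (hA : A < cube d) :
    ∃ w i, w i = 1 ∧ ¬ A.Adj w (w + Pi.single i 1) := by
  obtain ⟨x, y, hxy, hmiss⟩ : ∃ x y, (cube d).Adj x y ∧ ¬ A.Adj x y := by
    by_contra! h
    exact hA.not_ge fun x y hxy => h x y hxy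
  obtain ⟨i, rfl⟩ := cube_adj_iff.mp hxy
  rcases ZMod.two_cases (x i) with h | h
  · refine ⟨x + Pi.single i 1, i, by simp [h], ?_⟩
    rwa [add_single_add_single_self, A.adj_comm]
  · exact ⟨x, i, h, hmiss⟩

lemma exists_step_of_topBitTree_le {A : SimpleGraph (Fin d → ZMod 2)} (hTA : topBitTree d ≤ A)
    (hA : A < cube d) :
    ∃ u v, ¬ A.Adj u v ∧ (cube d).Adj u v ∧ CopyAt (cube 2) (A ⊔ edge u v) u v := by
  obtain ⟨w, ⟨i, hwi, hmiss⟩, hmin⟩ :=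
    (measure (hammingNorm : (Fin d → ZMod 2) → ℕ)).wf.has_min
      {w | ∃ i, w i = 1 ∧ ¬ A.Adj w (w + Pi.single i 1)} (exists_missing_edge_of_lt_cube hA)
  obtain ⟨t, ht⟩ := exists_isTopBit (x := w) fun hw => by simp [hw] at hwi
  have hit : i < t := by
    rcases lt_trichotomy i t with h | rfl | h
    · exact h
    · exact absurd (hTA (topBitTree_adj_of_isTopBit ht)) hmiss
    · simp [ht.2 i h] at hwi
  have hsquare : A.Adj (w + Pi.single t 1) (w + Pi.single i 1 + Pi.single t 1) := by
    rw [add_right_comm]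
    by_contra h
    exact hmin _ ⟨i, by simpa [hit.ne] using hwi, h⟩ (hammingNorm_add_single_lt ht.1)
  refine ⟨w, w + Pi.single i 1, hmiss, cube_adj_add_single w i,
    copyAt_cube_two_of_square (.inr ((edge_adj ..).mpr ⟨.inl ⟨rfl, rfl⟩, ?_⟩))
      (.inl (hTA (topBitTree_adj_of_isTopBit (ht.add_single_of_lt hit)))) (.inl hsquare.symm)
      (.inl (hTA (topBitTree_adj_of_isTopBit ht)).symm) ?_ ?_⟩
  · exact (cube_adj_add_single w i).ne
  all_goals exact fun h => by simpa [hit.ne] using congrFun h i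

theorem topBitTree_weaklySaturated : WeaklySaturated (cube d) (topBitTree d) (cube 2) :=
  weaklySaturated_of_exists_step topBitTree_le_cube fun _ hTA hA =>
    exists_step_of_topBitTree_le hTA hA

end TopBitTree

theorem stmt_16_general (d : ℕ) :
    (∃ T : SimpleGraph (Fin d → ZMod 2), T ≤ cube d ∧ T.IsTree ∧
      WeaklySaturated (cube d) T (cube 2)) ∧
    wsatNum (cube d) (cube 2) = 2 ^ d - 1 := by
  refine ⟨⟨topBitTree d, topBitTree_le_cube, topBitTree_isTree, topBitTree_weaklySaturated⟩, ?_⟩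
  rw [wsatNum_eq_of_isTree (fun _ => not_isBridge_cube le_rfl) topBitTree_isTree
    topBitTree_weaklySaturated]
  simp

theorem stmt_16 (d : ℕ) (hd : 2 ≤ d) :
    (∃ T : SimpleGraph (Fin d → ZMod 2), T ≤ cube d ∧ T.IsTree ∧
      WeaklySaturated (cube d) T (cube 2)) ∧
    wsatNum (cube d) (cube 2) = 2 ^ d - 1 :=
  stmt_16_general d
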